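/- arXiv:2409.11247 — 7 statements merged into one kernel-verified Lean document; each statement's English description precedes it below -/
import Mathlib

section
/- Let H be a real Hilbert space, let A, B, E, S : H → H be continuous linear maps, and let N > 0 be real. Assume the algebraic Riccati equation E∘A + A*∘E − E∘B∘B*∘E + N·id = 0 and, with M := A − B∘B*∘E, the Lyapunov equation M∘S + S∘M* = B∘B*. Assume there are constants C > 0 and ν > 0 such that ‖exp(tM)‖ ≤ C e^{−νt} and ‖exp(tM*)‖ ≤ C e^{−νt} for all t ≥ 0. Then there exists a constant K > 0, depending only on C, ‖E‖ and ‖S‖, such that for every T > 0 and every pair of differentiable functions ỹ, p̃ : ℝ → H satisfying ỹ'(t) = A ỹ(t) − B(B* p̃(t)) and p̃'(t) = −A* p̃(t) − N·ỹ(t) for all t ∈ [0, T], one has, for every t ∈ [0, T], ‖ỹ(t)‖ + ‖p̃(t)‖ ≤ K (‖ỹ(0)‖ + ‖p̃(0)‖) e^{−νt} + K (‖ỹ(T)‖ + ‖p̃(T)‖) e^{−ν(T−t)}. (Exponential turnpike estimate: the extremal pair stays exponentially close to the steady optimal pair except near t = 0 and t = T.) -/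
/-!
The Riccati solution `E` is self-adjoint: `X = E* - E` solves `M* X + X M = 0`, so
`X = exp(tM*) X exp(tM)` for all `t`, and the right-hand side tends to `0`.
With `E = E*`, the change of variables `q = p̃ - E ỹ`, `z = ỹ - S q` decouples the Hamiltonian
system: the Riccati equation gives `q' = -M* q` and the Lyapunov equation gives `z' = M z`.
Thus `z` decays forward from `t = 0` and `q` decays backward from `t = T`, and both the change of
variables and its inverse are bounded by `(1 + ‖E‖)(1 + ‖S‖)`.
-/

open ContinuousLinearMap

variable {H : Type*} [NormedAddCommGroup H] [InnerProductSpace ℝ H] [CompleteSpace H]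

open Set Filter Topology

section BanachAlgebra

variable {𝔸 : Type*} [NormedRing 𝔸] [NormedAlgebra ℝ 𝔸] [CompleteSpace 𝔸]

theorem exp_smul_mul_mul_exp_smul_eq_of_mul_add_mul_eq_zero {a b d : 𝔸}
    (h : b * d + d * a = 0) (t : ℝ) :
    NormedSpace.exp (t • b) * d * NormedSpace.exp (t • a) = d := by
  have hderiv : ∀ s : ℝ, HasDerivAt
      (fun u : ℝ => NormedSpace.exp (u • b) * d * NormedSpace.exp (u • a)) 0 s := by
    intro s
    refine (((hasDerivAt_exp_smul_const b s).mul_const d).mul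
      (hasDerivAt_exp_smul_const' a s)).congr_deriv ?_
    calc _ = NormedSpace.exp (s • b) * (b * d + d * a) * NormedSpace.exp (s • a) := by
          noncomm_ring
      _ = 0 := by rw [h, mul_zero, zero_mul]
  simpa using is_const_of_deriv_eq_zero (fun s => (hderiv s).differentiableAt)
    (fun s => (hderiv s).deriv) t 0

theorem eq_zero_of_mul_add_mul_eq_zero_of_exp_decay {a b d : 𝔸} (h : b * d + d * a = 0)
    {C ν : ℝ} (hν : 0 < ν)
    (ha : ∀ t : ℝ, 0 ≤ t → ‖NormedSpace.exp (t • a)‖ ≤ C * Real.exp (-ν * t))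
    (hb : ∀ t : ℝ, 0 ≤ t → ‖NormedSpace.exp (t • b)‖ ≤ C * Real.exp (-ν * t)) :
    d = 0 := by
  have hdecay : Tendsto (fun t : ℝ => C * Real.exp (-ν * t) * ‖d‖ * (C * Real.exp (-ν * t)))
      atTop (𝓝 0) := by
    have he : Tendsto (fun t : ℝ => Real.exp (-ν * t)) atTop (𝓝 0) := by
      exact Real.tendsto_exp_atBot.comp (tendsto_id.const_mul_atTop_of_neg (neg_neg_of_pos hν))
    simpa using ((he.const_mul C).mul_const ‖d‖).mul (he.const_mul C)
  have hbound : ∀ᶠ t in atTop, ‖d‖ ≤ C * Real.exp (-ν * t) * ‖d‖ * (C * Real.exp (-ν * t)) := by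
    filter_upwards [eventually_ge_atTop 0] with t ht
    calc ‖d‖ = ‖NormedSpace.exp (t • b) * d * NormedSpace.exp (t • a)‖ := by
          rw [exp_smul_mul_mul_exp_smul_eq_of_mul_add_mul_eq_zero h]
      _ ≤ ‖NormedSpace.exp (t • b)‖ * ‖d‖ * ‖NormedSpace.exp (t • a)‖ :=
          norm_mul₃_le
      _ ≤ _ := mul_le_mul (mul_le_mul_of_nonneg_right (hb t ht) (norm_nonneg d)) (ha t ht)
          (norm_nonneg _) (mul_nonneg ((norm_nonneg _).trans (hb t ht)) (norm_nonneg d))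
  exact norm_le_zero_iff.1 (ge_of_tendsto hdecay hbound)

end BanachAlgebra

section LinearODE

variable {F : Type*} [NormedAddCommGroup F] [NormedSpace ℝ F] [CompleteSpace F]

theorem eq_exp_smul_apply_of_hasDerivAt (W : F →L[ℝ] F) {z : ℝ → F} {a b : ℝ}
    (hz : ∀ t ∈ Icc a b, HasDerivAt z (W (z t)) t) {s t : ℝ} (hs : s ∈ Icc a b)
    (ht : t ∈ Icc a b) :
    z t = NormedSpace.exp ((t - s) • W) (z s) := by
  set g : ℝ → F := fun u => NormedSpace.exp ((t - u) • W) (z u)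
  have hderiv : ∀ u ∈ Icc a b, HasDerivAt g 0 u := by
    intro u hu
    have hexp : HasDerivAt (fun v : ℝ => NormedSpace.exp ((t - v) • W))
        (-(NormedSpace.exp ((t - u) • W) * W)) u := by
      simpa [Function.comp_def] using (hasDerivAt_exp_smul_const W (t - u)).scomp u
        ((hasDerivAt_id u).const_sub t)
    convert hexp.clm_apply (hz u hu) using 1
    simp
  have hconst : ∀ u ∈ Icc a b, g u = g a := constant_of_has_deriv_right_zero
    (fun u hu => (hderiv u hu).continuousAt.continuousWithinAt)
    (fun u hu => (hderiv u (Ico_subset_Icc_self hu)).hasDerivWithinAt)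
  simpa [g] using (hconst t ht).trans (hconst s hs).symm

end LinearODE

section ChangeOfVariables

variable {F : Type*} [SeminormedAddCommGroup F] [NormedSpace ℝ F]

theorem norm_sub_apply_le (E : F →L[ℝ] F) (y p : F) :
    ‖p - E y‖ ≤ (1 + ‖E‖) * (‖y‖ + ‖p‖) := by
  have := E.le_opNorm y
  nlinarith [norm_sub_le p (E y), norm_nonneg y, norm_nonneg p, norm_nonneg E]

theorem norm_sub_apply_sub_apply_le (E S : F →L[ℝ] F) (y p : F) :
    ‖y - S (p - E y)‖ ≤ (1 + ‖E‖) * (1 + ‖S‖) * (‖y‖ + ‖p‖) := by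
  have hS := S.le_opNorm (p - E y)
  have hq := norm_sub_apply_le E y p
  nlinarith [norm_sub_le y (S (p - E y)), norm_nonneg y, norm_nonneg p, norm_nonneg E,
    norm_nonneg S, mul_le_mul_of_nonneg_left hq (norm_nonneg S)]

theorem norm_add_norm_le_of_sub_apply (E S : F →L[ℝ] F) (y p : F) :
    ‖y‖ + ‖p‖ ≤ (1 + ‖E‖) * (1 + ‖S‖) * (‖y - S (p - E y)‖ + ‖p - E y‖) := by
  set q := p - E y
  set z := y - S q
  have hy : ‖y‖ ≤ ‖z‖ + ‖S‖ * ‖q‖ := by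
    calc ‖y‖ = ‖z + S q‖ := by simp [z]
      _ ≤ ‖z‖ + ‖S‖ * ‖q‖ := (norm_add_le _ _).trans (by gcongr; exact S.le_opNorm q)
  have hp : ‖p‖ ≤ ‖q‖ + ‖E‖ * ‖y‖ := by
    calc ‖p‖ = ‖q + E y‖ := by simp [q]
      _ ≤ ‖q‖ + ‖E‖ * ‖y‖ := (norm_add_le _ _).trans (by gcongr; exact E.le_opNorm y)
  calc ‖y‖ + ‖p‖ ≤ ‖q‖ + (1 + ‖E‖) * ‖y‖ := by linarith
    _ ≤ ‖q‖ + (1 + ‖E‖) * (‖z‖ + ‖S‖ * ‖q‖) := by gcongr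
    _ ≤ (1 + ‖E‖) * (1 + ‖S‖) * (‖z‖ + ‖q‖) := by
      nlinarith [mul_nonneg (mul_nonneg (norm_nonneg E) (norm_nonneg S)) (norm_nonneg z),
        norm_nonneg z, norm_nonneg q, norm_nonneg E, norm_nonneg S,
        mul_nonneg (norm_nonneg E) (norm_nonneg q), mul_nonneg (norm_nonneg S) (norm_nonneg z)]

end ChangeOfVariables

section LyapunovEquation

variable {F : Type*} [NormedAddCommGroup F] [NormedSpace ℝ F]

theorem hasDerivAt_sub_apply_of_lyapunov {M M' S G : F →L[ℝ] F} (h : M ∘L S + S ∘L M' = G)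
    {y q : ℝ → F} {t : ℝ} (hy : HasDerivAt y (M (y t) - G (q t)) t)
    (hq : HasDerivAt q ((-M') (q t)) t) :
    HasDerivAt (fun s => y s - S (q s)) (M (y t - S (q t))) t := by
  refine (hy.sub (S.hasFDerivAt.comp_hasDerivAt t hq)).congr_deriv ?_
  rw [← h]
  simp only [add_apply, comp_apply, neg_apply, map_neg, map_sub]
  abel

end LyapunovEquation

noncomputable def closedLoop (A B E : H →L[ℝ] H) : H →L[ℝ] H := A - B ∘L adjoint B ∘L E

section Riccati

variable (A B E : H →L[ℝ] H) (N : ℝ)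

theorem adjoint_closedLoop_mul_add_mul_closedLoop :
    adjoint (closedLoop A B E) * (adjoint E - E) + (adjoint E - E) * closedLoop A B E
      = adjoint (E ∘L A + adjoint A ∘L E - E ∘L B ∘L adjoint B ∘L E + N • (1 : H →L[ℝ] H))
        - (E ∘L A + adjoint A ∘L E - E ∘L B ∘L adjoint B ∘L E + N • (1 : H →L[ℝ] H)) := by
  simp only [closedLoop, map_add, map_sub, map_smul, adjoint_comp, adjoint_adjoint, adjoint_one]
  simp only [← ContinuousLinearMap.mul_def]
  noncomm_ring

variable {A B E N}

theorem adjoint_eq_of_riccati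
    (hRic : E ∘L A + adjoint A ∘L E - E ∘L B ∘L adjoint B ∘L E + N • (1 : H →L[ℝ] H) = 0)
    {C ν : ℝ} (hν : 0 < ν)
    (hM : ∀ t : ℝ, 0 ≤ t → ‖NormedSpace.exp (t • closedLoop A B E)‖ ≤ C * Real.exp (-ν * t))
    (hMstar : ∀ t : ℝ, 0 ≤ t →
      ‖NormedSpace.exp (t • adjoint (closedLoop A B E))‖ ≤ C * Real.exp (-ν * t)) :
    adjoint E = E := by
  have hsylvester := adjoint_closedLoop_mul_add_mul_closedLoop A B E N
  rw [hRic, map_zero, sub_zero] at hsylvester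
  exact sub_eq_zero.1 (eq_zero_of_mul_add_mul_eq_zero_of_exp_decay hsylvester hν hM hMstar)

theorem hasDerivAt_sub_apply_of_riccati
    (hRic : E ∘L A + adjoint A ∘L E - E ∘L B ∘L adjoint B ∘L E + N • (1 : H →L[ℝ] H) = 0)
    (hE : adjoint E = E) {y p : ℝ → H} {t : ℝ}
    (hy : HasDerivAt y (A (y t) - B (adjoint B (p t))) t)
    (hp : HasDerivAt p (-(adjoint A (p t)) - N • y t) t) :
    HasDerivAt (fun s => p s - E (y s)) ((-adjoint (closedLoop A B E)) (p t - E (y t))) t := by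
  refine (hp.sub (E.hasFDerivAt.comp_hasDerivAt t hy)).congr_deriv ?_
  have hRic_y := congrArg (· (y t)) hRic
  simp only [add_apply, sub_apply, comp_apply, smul_apply, one_apply_eq_self,
    zero_apply] at hRic_y
  simp only [closedLoop, map_sub, adjoint_comp, adjoint_adjoint, hE, neg_apply, sub_apply,
    comp_apply]
  linear_combination (norm := module) -hRic_y

end Riccati

theorem stmt3_general (A B E S : H →L[ℝ] H) (N : ℝ)
    (hRic : E ∘L A + adjoint A ∘L E - E ∘L B ∘L adjoint B ∘L E
        + N • (1 : H →L[ℝ] H) = 0)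
    (hLyap : (A - B ∘L adjoint B ∘L E) ∘L S
        + S ∘L adjoint (A - B ∘L adjoint B ∘L E) = B ∘L adjoint B)
    (C ν : ℝ) (hC : 0 < C) (hν : 0 < ν)
    (hM : ∀ t : ℝ, 0 ≤ t →
      ‖NormedSpace.exp (t • (A - B ∘L adjoint B ∘L E))‖ ≤ C * Real.exp (-ν * t))
    (hMstar : ∀ t : ℝ, 0 ≤ t →
      ‖NormedSpace.exp (t • adjoint (A - B ∘L adjoint B ∘L E))‖ ≤ C * Real.exp (-ν * t)) :
    ∃ K : ℝ, 0 < K ∧ ∀ T : ℝ, 0 < T → ∀ ytil ptil : ℝ → H,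
      (∀ t ∈ Set.Icc (0:ℝ) T,
        HasDerivAt ytil (A (ytil t) - B (adjoint B (ptil t))) t) →
      (∀ t ∈ Set.Icc (0:ℝ) T,
        HasDerivAt ptil (-(adjoint A (ptil t)) - N • ytil t) t) →
      ∀ t ∈ Set.Icc (0:ℝ) T,
        ‖ytil t‖ + ‖ptil t‖ ≤
          K * (‖ytil 0‖ + ‖ptil 0‖) * Real.exp (-ν * t) +
            K * (‖ytil T‖ + ‖ptil T‖) * Real.exp (-ν * (T - t)) := by
  have hE : adjoint E = E := adjoint_eq_of_riccati hRic hν hM hMstar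
  set κ := (1 + ‖E‖) * (1 + ‖S‖)
  refine ⟨C * κ ^ 2, by positivity, fun T hT y p hy hp t ht => ?_⟩
  set q : ℝ → H := fun s => p s - E (y s)
  set z : ℝ → H := fun s => y s - S (q s)
  have hq (s : ℝ) (hs : s ∈ Icc 0 T) :
      HasDerivAt q ((-adjoint (closedLoop A B E)) (q s)) s :=
    hasDerivAt_sub_apply_of_riccati hRic hE (hy s hs) (hp s hs)
  have hz (s : ℝ) (hs : s ∈ Icc 0 T) : HasDerivAt z (closedLoop A B E (z s)) s := by
    refine hasDerivAt_sub_apply_of_lyapunov hLyap ((hy s hs).congr_deriv ?_) (hq s hs)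
    simp only [q, sub_apply, comp_apply, map_sub]
    abel
  have hzt : ‖z t‖ ≤ C * Real.exp (-ν * t) * ‖z 0‖ := by
    rw [eq_exp_smul_apply_of_hasDerivAt _ hz (left_mem_Icc.2 hT.le) ht, sub_zero]
    exact (le_opNorm _ _).trans (by gcongr; exact hM t ht.1)
  have hqt : ‖q t‖ ≤ C * Real.exp (-ν * (T - t)) * ‖q T‖ := by
    rw [eq_exp_smul_apply_of_hasDerivAt _ hq (right_mem_Icc.2 hT.le) ht, smul_neg, ← neg_smul,
      neg_sub]
    exact (le_opNorm _ _).trans (by gcongr; exact hMstar _ (sub_nonneg.2 ht.2))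
  have hz0 : ‖z 0‖ ≤ κ * (‖y 0‖ + ‖p 0‖) := norm_sub_apply_sub_apply_le E S _ _
  have hqT : ‖q T‖ ≤ κ * (‖y T‖ + ‖p T‖) := (norm_sub_apply_le E _ _).trans <|
    mul_le_mul_of_nonneg_right (le_mul_of_one_le_right (by positivity) (by simp)) (by positivity)
  calc ‖y t‖ + ‖p t‖ ≤ κ * (‖z t‖ + ‖q t‖) := norm_add_norm_le_of_sub_apply E S _ _
    _ ≤ κ * (C * Real.exp (-ν * t) * (κ * (‖y 0‖ + ‖p 0‖))
          + C * Real.exp (-ν * (T - t)) * (κ * (‖y T‖ + ‖p T‖))) := by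
      gcongr
      exacts [hzt.trans (by gcongr), hqt.trans (by gcongr)]
    _ = _ := by ring

/-- Exponential turnpike estimate: if `E` solves the algebraic Riccati equation, `S` the
Lyapunov equation, and the semigroups generated by `M := A − B B* E` and `M*` decay like
`C e^{−νt}`, then there is `K > 0` such that every solution of the Hamiltonian system on
`[0, T]` satisfies
`‖ỹ(t)‖ + ‖p̃(t)‖ ≤ K(‖ỹ(0)‖ + ‖p̃(0)‖)e^{−νt} + K(‖ỹ(T)‖ + ‖p̃(T)‖)e^{−ν(T−t)}`. -/
theorem stmt3 (A B E S : H →L[ℝ] H) (N : ℝ) (hN : 0 < N)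
    (hRic : E ∘L A + adjoint A ∘L E - E ∘L B ∘L adjoint B ∘L E
        + N • (1 : H →L[ℝ] H) = 0)
    (hLyap : (A - B ∘L adjoint B ∘L E) ∘L S
        + S ∘L adjoint (A - B ∘L adjoint B ∘L E) = B ∘L adjoint B)
    (C ν : ℝ) (hC : 0 < C) (hν : 0 < ν)
    (hM : ∀ t : ℝ, 0 ≤ t →
      ‖NormedSpace.exp (t • (A - B ∘L adjoint B ∘L E))‖ ≤ C * Real.exp (-ν * t))
    (hMstar : ∀ t : ℝ, 0 ≤ t →
      ‖NormedSpace.exp (t • adjoint (A - B ∘L adjoint B ∘L E))‖ ≤ C * Real.exp (-ν * t)) :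
    ∃ K : ℝ, 0 < K ∧ ∀ T : ℝ, 0 < T → ∀ ytil ptil : ℝ → H,
      (∀ t ∈ Set.Icc (0:ℝ) T,
        HasDerivAt ytil (A (ytil t) - B (adjoint B (ptil t))) t) →
      (∀ t ∈ Set.Icc (0:ℝ) T,
        HasDerivAt ptil (-(adjoint A (ptil t)) - N • ytil t) t) →
      ∀ t ∈ Set.Icc (0:ℝ) T,
        ‖ytil t‖ + ‖ptil t‖ ≤
          K * (‖ytil 0‖ + ‖ptil 0‖) * Real.exp (-ν * t) +
            K * (‖ytil T‖ + ‖ptil T‖) * Real.exp (-ν * (T - t)) :=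
  stmt3_general A B E S N hRic hLyap C ν hC hν hM hMstar
end

section
/- Let H be a real Hilbert space, let A, B : H → H be continuous linear maps, let N be a real constant, and let E : H → H be a continuous linear map that is self-adjoint (E* = E) and satisfies the algebraic Riccati equation E∘A + A*∘E − E∘B∘B*∘E + N·id = 0. Let y : ℝ → H be differentiable with y'(t) = (A − B∘B*∘E)(y(t)) for all t. Then the function t ↦ ⟨E y(t), y(t)⟩ is differentiable with derivative (d/dt)⟨E y(t), y(t)⟩ = −( N‖y(t)‖² + ‖B*(E y(t))‖² ) for every t. In particular, if E is positive definite and N > 0, then V(y) = ⟨E y, y⟩ is a Lyapunov function that is strictly decreasing along every nonzero trajectory of the closed-loop system y' = (A − B B* E) y. -/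
/-!
Differentiating `⟪E y, y⟫` along a trajectory gives `2 ⟪E y, (A − B B* E) y⟫` since `E` is
self-adjoint. Evaluating the Riccati equation as a quadratic form at `y` turns
`2 ⟪E y, A y⟫` into `‖B* E y‖² − N ‖y‖²`, and the feedback term contributes `−2 ‖B* E y‖²`.
For `N > 0` the derivative is therefore negative wherever `y ≠ 0`.
-/

open ContinuousLinearMap
open scoped RealInnerProductSpace

variable {H : Type*} [NormedAddCommGroup H] [InnerProductSpace ℝ H] [CompleteSpace H]

theorem IsSelfAdjoint.real_inner_apply_comm {E : H →L[ℝ] H} (hE : IsSelfAdjoint E) (x y : H) :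
    ⟪E x, y⟫ = ⟪E y, x⟫ :=
  ((hE.isSymmetric y x).trans (real_inner_comm _ _)).symm

theorem HasDerivAt.inner_apply_self {E : H →L[ℝ] H} (hE : IsSelfAdjoint E) {y : ℝ → H}
    {y' : H} {t : ℝ} (hy : HasDerivAt y y' t) :
    HasDerivAt (fun s => ⟪E (y s), y s⟫) (2 * ⟪E (y t), y'⟫) t := by
  refine ((E.hasFDerivAt.comp_hasDerivAt t hy).inner ℝ hy).congr_deriv ?_
  rw [Function.comp_apply, hE.real_inner_apply_comm y']
  ring

theorem inner_comp_adjoint_comp_apply_self {E : H →L[ℝ] H} (hE : IsSelfAdjoint E)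
    (B : H →L[ℝ] H) (x : H) :
    ⟪E (B (adjoint B (E x))), x⟫ = ‖adjoint B (E x)‖ ^ 2 := by
  rw [hE.real_inner_apply_comm, ← adjoint_inner_left, real_inner_self_eq_norm_sq]

theorem riccati_inner_apply_self {A B E : H →L[ℝ] H} {N : ℝ} (hE : IsSelfAdjoint E)
    (hRic : E ∘L A + adjoint A ∘L E - E ∘L B ∘L adjoint B ∘L E + N • (1 : H →L[ℝ] H) = 0)
    (x : H) :
    2 * ⟪E x, A x⟫ - ‖adjoint B (E x)‖ ^ 2 + N * ‖x‖ ^ 2 = 0 := by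
  have hform := congrArg (fun T : H →L[ℝ] H => ⟪T x, x⟫) hRic
  simp only [add_apply, sub_apply, comp_apply, smul_apply, one_apply_eq_self, zero_apply,
    inner_add_left, inner_sub_left, real_inner_smul_left, inner_zero_left,
    adjoint_inner_left, hE.real_inner_apply_comm (A x), inner_comp_adjoint_comp_apply_self hE,
    real_inner_self_eq_norm_sq] at hform
  linarith

theorem riccati_inner_closedLoop {A B E : H →L[ℝ] H} {N : ℝ} (hE : IsSelfAdjoint E)
    (hRic : E ∘L A + adjoint A ∘L E - E ∘L B ∘L adjoint B ∘L E + N • (1 : H →L[ℝ] H) = 0)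
    (x : H) :
    2 * ⟪E x, (A - B ∘L adjoint B ∘L E) x⟫ = -(N * ‖x‖ ^ 2 + ‖adjoint B (E x)‖ ^ 2) := by
  have hfeedback : ⟪E x, B (adjoint B (E x))⟫ = ‖adjoint B (E x)‖ ^ 2 := by
    rw [← adjoint_inner_left, real_inner_self_eq_norm_sq]
  rw [sub_apply, comp_apply, comp_apply, inner_sub_right, hfeedback]
  linarith [riccati_inner_apply_self hE hRic x]

/-- If the self-adjoint operator `E` solves the algebraic Riccati equation, then along any
trajectory of the closed-loop system `y' = (A − B B* E) y` the quadratic form `⟨E y, y⟩`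
has derivative `−(N‖y‖² + ‖B*(E y)‖²)`; in particular, if `E` is positive definite and
`N > 0`, then `V(y) = ⟨E y, y⟩` is strictly decreasing along every nonzero trajectory. -/
theorem stmt4 (A B E : H →L[ℝ] H) (N : ℝ)
    (hE : adjoint E = E)
    (hRic : E ∘L A + adjoint A ∘L E - E ∘L B ∘L adjoint B ∘L E
        + N • (1 : H →L[ℝ] H) = 0)
    (y : ℝ → H)
    (hy : ∀ t : ℝ, HasDerivAt y ((A - B ∘L adjoint B ∘L E) (y t)) t) :
    (∀ t : ℝ, HasDerivAt (fun s => ⟪E (y s), y s⟫)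
      (-(N * ‖y t‖ ^ 2 + ‖adjoint B (E (y t))‖ ^ 2)) t) ∧
    (0 < N → (∀ x : H, x ≠ 0 → 0 < ⟪E x, x⟫) → (∀ t : ℝ, y t ≠ 0) →
      StrictAnti fun t : ℝ => ⟪E (y t), y t⟫) := by
  have hE' : IsSelfAdjoint E := hE
  have hderiv : ∀ t, HasDerivAt (fun s => ⟪E (y s), y s⟫)
      (-(N * ‖y t‖ ^ 2 + ‖adjoint B (E (y t))‖ ^ 2)) t := fun t => by
    rw [← riccati_inner_closedLoop hE' hRic]
    exact (hy t).inner_apply_self hE'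
  refine ⟨hderiv, fun hN _ hne => strictAnti_of_hasDerivAt_neg hderiv fun t => ?_⟩
  have hnorm : 0 < ‖y t‖ := norm_pos_iff.mpr (hne t)
  have : 0 < N * ‖y t‖ ^ 2 := by positivity
  linarith [sq_nonneg ‖adjoint B (E (y t))‖]
end

section
/- Let H be a real Hilbert space, let A, B : H → H be continuous linear maps, let N be a real constant, and let E : H → H be a continuous linear self-adjoint map satisfying the algebraic Riccati equation E∘A + A*∘E − E∘B∘B*∘E + N·id = 0. Let T > 0 and let y : ℝ → H be continuously differentiable with y'(t) = (A − B∘B*∘E)(y(t)) for all t ∈ [0, T]. Then ⟨E y(0), y(0)⟩ − ⟨E y(T), y(T)⟩ = ∫₀^T ( N‖y(t)‖² + ‖B*(E y(t))‖² ) dt. (Integrated Riccati energy identity: the quadratic form ⟨E·,·⟩ evaluated at the initial state equals the accumulated running cost plus the terminal quadratic form.) -/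
/-! Along a closed-loop trajectory, the Riccati equation turns the derivative
`2⟪E y, (A - B B* E) y⟫` of the quadratic form `⟪E y, y⟫` into the negative running cost
`-(N‖y‖² + ‖B* E y‖²)`; the identity is the fundamental theorem of calculus on `[0, T]`. -/

open ContinuousLinearMap
open scoped RealInnerProductSpace

theorem HasDerivAt.inner_apply_self_of_isSymmetric {F : Type*} [NormedAddCommGroup F]
    [InnerProductSpace ℝ F] {E : F →L[ℝ] F} (hE : (E : F →ₗ[ℝ] F).IsSymmetric)
    {y : ℝ → F} {y' : F} {t : ℝ} (hy : HasDerivAt y y' t) :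
    HasDerivAt (fun s => ⟪E (y s), y s⟫) (2 * ⟪E (y t), y'⟫) t := by
  refine ((E.hasFDerivAt.comp_hasDerivAt t hy).inner ℝ hy).congr_deriv ?_
  have hswap : ⟪E y', y t⟫ = ⟪E (y t), y'⟫ := by
    rw [real_inner_comm]; exact (hE (y t) y').symm
  rw [hswap, Function.comp_apply, two_mul]

variable {H : Type*} [NormedAddCommGroup H] [InnerProductSpace ℝ H] [CompleteSpace H]

theorem inner_riccatiOperator_apply_self (A B E : H →L[ℝ] H) (N : ℝ) (hE : IsSelfAdjoint E)
    (x : H) :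
    ⟪(E ∘L A + adjoint A ∘L E - E ∘L B ∘L adjoint B ∘L E + N • (1 : H →L[ℝ] H)) x, x⟫ =
      2 * ⟪E x, A x⟫ - ‖adjoint B (E x)‖ ^ 2 + N * ‖x‖ ^ 2 := by
  have hsymm : ∀ u w, ⟪E u, w⟫ = ⟪u, E w⟫ := hE.isSymmetric
  have hEA : ⟪E (A x), x⟫ = ⟪E x, A x⟫ := by rw [hsymm, real_inner_comm]
  have hAE : ⟪adjoint A (E x), x⟫ = ⟪E x, A x⟫ := adjoint_inner_left A x (E x)
  have hEBBE : ⟪E (B (adjoint B (E x))), x⟫ = ‖adjoint B (E x)‖ ^ 2 := by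
    rw [hsymm, ← adjoint_inner_right, real_inner_self_eq_norm_sq]
  simp only [add_apply, sub_apply, comp_apply, smul_apply, one_apply_eq_self, inner_add_left,
    inner_sub_left, real_inner_smul_left, hEA, hAE, hEBBE, real_inner_self_eq_norm_sq]
  ring

theorem two_mul_inner_closedLoop_of_riccati (A B E : H →L[ℝ] H) (N : ℝ) (hE : IsSelfAdjoint E)
    (hRic : E ∘L A + adjoint A ∘L E - E ∘L B ∘L adjoint B ∘L E + N • (1 : H →L[ℝ] H) = 0)
    (x : H) :
    2 * ⟪E x, (A - B ∘L adjoint B ∘L E) x⟫ = -(N * ‖x‖ ^ 2 + ‖adjoint B (E x)‖ ^ 2) := by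
  have hquad := inner_riccatiOperator_apply_self A B E N hE x
  rw [hRic, zero_apply, inner_zero_left] at hquad
  rw [sub_apply, comp_apply, comp_apply, inner_sub_right,
    ← adjoint_inner_left B (adjoint B (E x)) (E x), real_inner_self_eq_norm_sq]
  linarith

/-- Integrated Riccati energy identity: if the self-adjoint operator `E` solves the
algebraic Riccati equation and `y' = (A − B B* E) y` on `[0, T]`, then
`⟨E y(0), y(0)⟩ − ⟨E y(T), y(T)⟩ = ∫₀ᵀ (N‖y(t)‖² + ‖B*(E y(t))‖²) dt`. -/
theorem stmt5 (A B E : H →L[ℝ] H) (N : ℝ)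
    (hE : adjoint E = E)
    (hRic : E ∘L A + adjoint A ∘L E - E ∘L B ∘L adjoint B ∘L E
        + N • (1 : H →L[ℝ] H) = 0)
    (T : ℝ) (hT : 0 < T)
    (y : ℝ → H)
    (hy : ∀ t ∈ Set.Icc (0:ℝ) T,
      HasDerivAt y ((A - B ∘L adjoint B ∘L E) (y t)) t) :
    ⟪E (y 0), y 0⟫ - ⟪E (y T), y T⟫ =
      ∫ t in (0:ℝ)..T, (N * ‖y t‖ ^ 2 + ‖adjoint B (E (y t))‖ ^ 2) := by
  have hEsa : IsSelfAdjoint E := isSelfAdjoint_iff'.mpr hE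
  rw [← Set.uIcc_of_le hT.le] at hy
  have hderiv : ∀ t ∈ Set.uIcc (0:ℝ) T, HasDerivAt (fun s => ⟪E (y s), y s⟫)
      (-(N * ‖y t‖ ^ 2 + ‖adjoint B (E (y t))‖ ^ 2)) t := fun t ht => by
    rw [← two_mul_inner_closedLoop_of_riccati A B E N hEsa hRic]
    exact (hy t ht).inner_apply_self_of_isSymmetric hEsa.isSymmetric
  have hcont : ContinuousOn y (Set.uIcc (0:ℝ) T) := fun t ht =>
    (hy t ht).continuousAt.continuousWithinAt
  have hcost : ContinuousOn (fun t => -(N * ‖y t‖ ^ 2 + ‖adjoint B (E (y t))‖ ^ 2))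
      (Set.uIcc (0:ℝ) T) := by fun_prop
  have hFTC := intervalIntegral.integral_eq_sub_of_hasDerivAt hderiv hcost.intervalIntegrable
  rw [intervalIntegral.integral_neg] at hFTC
  linarith
end

section
/- Let H and U be real Hilbert spaces, let A : H → H and B : U → H be continuous linear maps, and let N be a real constant. Let T > 0 and let ỹ, p̃ : ℝ → H be differentiable functions satisfying, for all t ∈ [0, T], ỹ'(t) = A ỹ(t) + B(ṽ(t)) and p̃'(t) = −A* p̃(t) − N·ỹ(t), where ṽ(t) := −B*(p̃(t)). Then N ∫₀^T ‖ỹ(t)‖² dt + ∫₀^T ‖ṽ(t)‖² dt = ⟨ỹ(0), p̃(0)⟩ − ⟨ỹ(T), p̃(T)⟩. -/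
/-!
Along the coupled system, `d/dt ⟪ỹ, p̃⟫ = ⟪ỹ, -A* p̃ - N ỹ⟫ + ⟪A ỹ - B B* p̃, p̃⟫`; the two
`A`-terms cancel by adjointness, leaving `-(N ‖ỹ‖² + ‖B* p̃‖²)`. Integrating over `[0, T]`
gives the identity.
-/

open ContinuousLinearMap
open scoped RealInnerProductSpace

variable {H : Type*} [NormedAddCommGroup H] [InnerProductSpace ℝ H] [CompleteSpace H]
variable {U : Type*} [NormedAddCommGroup U] [InnerProductSpace ℝ U] [CompleteSpace U]

theorem integral_inner_deriv_eq_sub {E : Type*} [NormedAddCommGroup E]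
    [InnerProductSpace ℝ E] {f g f' g' : ℝ → E} {a b : ℝ}
    (hf : ∀ t ∈ Set.uIcc a b, HasDerivAt f (f' t) t)
    (hg : ∀ t ∈ Set.uIcc a b, HasDerivAt g (g' t) t)
    (hint : IntervalIntegrable (fun t => ⟪f t, g' t⟫ + ⟪f' t, g t⟫) MeasureTheory.volume a b) :
    ∫ t in a..b, (⟪f t, g' t⟫ + ⟪f' t, g t⟫) = ⟪f b, g b⟫ - ⟪f a, g a⟫ :=
  intervalIntegral.integral_eq_sub_of_hasDerivAt (fun t ht => (hf t ht).inner ℝ (hg t ht)) hint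

theorem inner_deriv_stateAdjoint_eq_neg (A : H →L[ℝ] H) (B : U →L[ℝ] H) (N : ℝ) (y p : H) :
    ⟪y, -(adjoint A p) - N • y⟫ + ⟪A y + B (-(adjoint B p)), p⟫ =
      -(N * ‖y‖ ^ 2 + ‖-(adjoint B p)‖ ^ 2) := by
  have hB : ⟪B (adjoint B p), p⟫ = ‖adjoint B p‖ ^ 2 := by
    rw [← adjoint_inner_right, real_inner_self_eq_norm_sq]
  simp only [inner_sub_right, inner_add_left, inner_smul_right, inner_neg_right, map_neg,
    inner_neg_left, adjoint_inner_right, real_inner_self_eq_norm_sq, norm_neg, hB]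
  ring

/-- Pairing identity for the deviation variables of the state–adjoint system with
feedback `ṽ = −B* p̃`:
`N ∫₀ᵀ ‖ỹ‖² + ∫₀ᵀ ‖ṽ‖² = ⟨ỹ(0), p̃(0)⟩ − ⟨ỹ(T), p̃(T)⟩`. -/
theorem stmt6 (A : H →L[ℝ] H) (B : U →L[ℝ] H) (N T : ℝ) (hT : 0 < T)
    (ytil ptil : ℝ → H)
    (hy : ∀ t ∈ Set.Icc (0:ℝ) T,
      HasDerivAt ytil (A (ytil t) + B (-(adjoint B (ptil t)))) t)
    (hp : ∀ t ∈ Set.Icc (0:ℝ) T,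
      HasDerivAt ptil (-(adjoint A (ptil t)) - N • ytil t) t) :
    N * (∫ t in (0:ℝ)..T, ‖ytil t‖ ^ 2)
        + (∫ t in (0:ℝ)..T, ‖-(adjoint B (ptil t))‖ ^ 2) =
      ⟪ytil 0, ptil 0⟫ - ⟪ytil T, ptil T⟫ := by
  rw [← Set.uIcc_of_le hT.le] at hy hp
  have hy2 : IntervalIntegrable (fun t => ‖ytil t‖ ^ 2) MeasureTheory.volume 0 T :=
    ((HasDerivAt.continuousOn hy).norm.pow 2).intervalIntegrable
  have hv2 : IntervalIntegrable (fun t => ‖-(adjoint B (ptil t))‖ ^ 2) MeasureTheory.volume 0 T :=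
    ((adjoint B).continuous.comp_continuousOn (HasDerivAt.continuousOn hp)).neg.norm.pow 2
      |>.intervalIntegrable
  have hsum : IntervalIntegrable
      (fun t => -(N * ‖ytil t‖ ^ 2 + ‖-(adjoint B (ptil t))‖ ^ 2)) MeasureTheory.volume 0 T :=
    ((hy2.const_mul N).add hv2).neg
  have key := integral_inner_deriv_eq_sub hy hp (by simpa only [inner_deriv_stateAdjoint_eq_neg])
  simp only [inner_deriv_stateAdjoint_eq_neg] at key
  rw [intervalIntegral.integral_neg, intervalIntegral.integral_add (hy2.const_mul N) hv2,
    intervalIntegral.integral_const_mul] at key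
  linarith
end

section
/- Let H and U be real Hilbert spaces, let A : H → H and B : U → H be continuous linear maps, and let N > 0 and A₀ > 0 be real constants. Let 0 < T ≤ A₀ and let ỹ, p̃ : ℝ → H be differentiable functions satisfying, for all t ∈ [0, T], ỹ'(t) = A ỹ(t) + B(ṽ(t)) and p̃'(t) = −A* p̃(t) − N·ỹ(t), where ṽ(t) := −B*(p̃(t)). Then ∫₀^T ( ‖ỹ(t)‖ + ‖ṽ(t)‖ ) dt ≤ (1 + 1/√N) · √( A₀ · ( ‖ỹ(0)‖·‖p̃(0)‖ + ‖ỹ(T)‖·‖p̃(T)‖ ) ). In particular, the time-integral of the deviation of the optimal pair from the steady optimal pair is bounded independently of the time horizon T ∈ (0, A₀]. -/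
/-!
Along the optimality system, `d/dt ⟪ỹ, p̃⟫ = -(N ‖ỹ‖² + ‖ṽ‖²)`, so the weighted `L²` energy of
`(ỹ, ṽ)` on `[0, T]` is bounded by the boundary terms `‖ỹ(0)‖‖p̃(0)‖ + ‖ỹ(T)‖‖p̃(T)‖`.
Cauchy–Schwarz on `[0, T]` turns these `L²` bounds into `L¹` bounds at the cost of a factor
`√T ≤ √A₀`.
-/

open ContinuousLinearMap

variable {H : Type*} [NormedAddCommGroup H] [InnerProductSpace ℝ H] [CompleteSpace H]
variable {U : Type*} [NormedAddCommGroup U] [InnerProductSpace ℝ U] [CompleteSpace U]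

theorem sq_intervalIntegral_le_mul_intervalIntegral_sq {f : ℝ → ℝ} {a b : ℝ} (hab : a ≤ b)
    (hf : IntervalIntegrable f MeasureTheory.volume a b)
    (hf2 : IntervalIntegrable (fun x => f x ^ 2) MeasureTheory.volume a b) :
    (∫ x in a..b, f x) ^ 2 ≤ (b - a) * ∫ x in a..b, f x ^ 2 := by
  have hquad (c : ℝ) : 0 ≤ (b - a) * (c * c) + (-2 * ∫ x in a..b, f x) * c
      + ∫ x in a..b, f x ^ 2 := by
    have hexpand : ∫ x in a..b, (f x - c) ^ 2
        = (b - a) * (c * c) + (-2 * ∫ x in a..b, f x) * c + ∫ x in a..b, f x ^ 2 := by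
      simp only [sub_sq']
      rw [intervalIntegral.integral_sub (hf2.add intervalIntegrable_const)
          ((hf.const_mul 2).mul_const c), intervalIntegral.integral_add hf2 intervalIntegrable_const,
        intervalIntegral.integral_mul_const, intervalIntegral.integral_const_mul,
        intervalIntegral.integral_const, smul_eq_mul]
      ring
    rw [← hexpand]
    exact intervalIntegral.integral_nonneg hab fun x _ => sq_nonneg _
  have hdiscrim := discrim_le_zero hquad
  rw [discrim] at hdiscrim
  linarith

theorem hasDerivAt_inner_of_optimality_system {A : H →L[ℝ] H} {B : U →L[ℝ] H} {N t : ℝ}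
    {y p : ℝ → H} (hy : HasDerivAt y (A (y t) + B (-(adjoint B (p t)))) t)
    (hp : HasDerivAt p (-(adjoint A (p t)) - N • y t) t) :
    HasDerivAt (fun s => inner ℝ (y s) (p s)) (-(N * ‖y t‖ ^ 2 + ‖adjoint B (p t)‖ ^ 2)) t := by
  refine (hy.inner ℝ hp).congr_deriv ?_
  rw [inner_sub_right, inner_neg_right, inner_smul_right, inner_add_left, map_neg,
    inner_neg_left, adjoint_inner_right A, ← adjoint_inner_right B, real_inner_self_eq_norm_sq,
    real_inner_self_eq_norm_sq]
  ring

theorem intervalIntegral_dissipation_le {A : H →L[ℝ] H} {B : U →L[ℝ] H} {N a b : ℝ}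
    {y p : ℝ → H} (hab : a ≤ b)
    (hy : ∀ t ∈ Set.Icc a b, HasDerivAt y (A (y t) + B (-(adjoint B (p t)))) t)
    (hp : ∀ t ∈ Set.Icc a b, HasDerivAt p (-(adjoint A (p t)) - N • y t) t) :
    ∫ t in a..b, (N * ‖y t‖ ^ 2 + ‖adjoint B (p t)‖ ^ 2) ≤ ‖y a‖ * ‖p a‖ + ‖y b‖ * ‖p b‖ := by
  rw [← Set.uIcc_of_le hab] at hy hp
  have hyc : ContinuousOn y (Set.uIcc a b) := HasDerivAt.continuousOn hy
  have hpc : ContinuousOn p (Set.uIcc a b) := HasDerivAt.continuousOn hp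
  have hFTC := intervalIntegral.integral_eq_sub_of_hasDerivAt
    (fun t ht => hasDerivAt_inner_of_optimality_system (hy t ht) (hp t ht))
    ((continuousOn_const.mul (hyc.norm.pow 2)).add
      (((adjoint B).continuous.comp_continuousOn hpc).norm.pow 2)).neg.intervalIntegrable
  rw [intervalIntegral.integral_neg] at hFTC
  linarith [real_inner_le_norm (y a) (p a), neg_le_of_abs_le (abs_real_inner_le_norm (y b) (p b))]

theorem add_le_of_sq_le_mul_of_energy_le {N T A₀ M Iy Iv Jy Jv : ℝ} (hN : 0 < N) (hT : 0 ≤ T)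
    (hTA : T ≤ A₀) (hJy : 0 ≤ Jy) (hJv : 0 ≤ Jv) (hE : N * Jy + Jv ≤ M)
    (hIy : Iy ^ 2 ≤ T * Jy) (hIv : Iv ^ 2 ≤ T * Jv) :
    Iy + Iv ≤ (1 + 1 / √N) * √(A₀ * M) := by
  have hA₀ : 0 ≤ A₀ := hT.trans hTA
  have hJyM : Jy ≤ M / N := by rw [le_div_iff₀ hN]; linarith
  have hIy' : Iy ≤ √(A₀ * M) / √N := calc
    Iy ≤ √(T * Jy) := (le_abs_self Iy).trans (Real.abs_le_sqrt hIy)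
    _ ≤ √(A₀ * (M / N)) := Real.sqrt_le_sqrt (mul_le_mul hTA hJyM hJy hA₀)
    _ = √(A₀ * M) / √N := by rw [← mul_div_assoc, Real.sqrt_div' _ hN.le]
  have hIv' : Iv ≤ √(A₀ * M) := calc
    Iv ≤ √(T * Jv) := (le_abs_self Iv).trans (Real.abs_le_sqrt hIv)
    _ ≤ √(A₀ * M) := Real.sqrt_le_sqrt (mul_le_mul hTA (by nlinarith) hJv hA₀)
  calc Iy + Iv ≤ √(A₀ * M) / √N + √(A₀ * M) := add_le_add hIy' hIv'
    _ = (1 + 1 / √N) * √(A₀ * M) := by ring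

theorem stmt7_general (A : H →L[ℝ] H) (B : U →L[ℝ] H) (N A₀ : ℝ) (hN : 0 < N)
    (T : ℝ) (hT : 0 < T) (hTA : T ≤ A₀)
    (ytil ptil : ℝ → H)
    (hy : ∀ t ∈ Set.Icc (0:ℝ) T,
      HasDerivAt ytil (A (ytil t) + B (-(adjoint B (ptil t)))) t)
    (hp : ∀ t ∈ Set.Icc (0:ℝ) T,
      HasDerivAt ptil (-(adjoint A (ptil t)) - N • ytil t) t) :
    (∫ t in (0:ℝ)..T, (‖ytil t‖ + ‖-(adjoint B (ptil t))‖)) ≤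
      (1 + 1 / Real.sqrt N) *
        Real.sqrt (A₀ * (‖ytil 0‖ * ‖ptil 0‖ + ‖ytil T‖ * ‖ptil T‖)) := by
  have hE := intervalIntegral_dissipation_le hT.le hy hp
  rw [← Set.uIcc_of_le hT.le] at hy hp
  have hy' : ContinuousOn (fun t => ‖ytil t‖) (Set.uIcc 0 T) :=
    (HasDerivAt.continuousOn hy).norm
  have hv' : ContinuousOn (fun t => ‖adjoint B (ptil t)‖) (Set.uIcc 0 T) :=
    ((adjoint B).continuous.comp_continuousOn (HasDerivAt.continuousOn hp)).norm
  have hy2 : ContinuousOn (fun t => ‖ytil t‖ ^ 2) (Set.uIcc 0 T) := hy'.pow 2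
  have hv2 : ContinuousOn (fun t => ‖adjoint B (ptil t)‖ ^ 2) (Set.uIcc 0 T) := hv'.pow 2
  rw [intervalIntegral.integral_add (hy2.intervalIntegrable.const_mul N)
    hv2.intervalIntegrable, intervalIntegral.integral_const_mul] at hE
  simp only [norm_neg]
  rw [intervalIntegral.integral_add hy'.intervalIntegrable hv'.intervalIntegrable]
  refine add_le_of_sq_le_mul_of_energy_le hN hT.le hTA
    (intervalIntegral.integral_nonneg hT.le fun t _ => by positivity)
    (intervalIntegral.integral_nonneg hT.le fun t _ => by positivity) hE ?_ ?_
  · simpa only [sub_zero] using sq_intervalIntegral_le_mul_intervalIntegral_sq hT.le hy'.intervalIntegrable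
      hy2.intervalIntegrable
  · simpa only [sub_zero] using sq_intervalIntegral_le_mul_intervalIntegral_sq hT.le hv'.intervalIntegrable
      hv2.intervalIntegrable

/-- Integral turnpike estimate: for `0 < T ≤ A₀`, the deviations `ỹ, ṽ = −B* p̃` of the
optimal pair from the steady optimal pair satisfy
`∫₀ᵀ (‖ỹ‖ + ‖ṽ‖) ≤ (1 + 1/√N) √(A₀ (‖ỹ(0)‖‖p̃(0)‖ + ‖ỹ(T)‖‖p̃(T)‖))`,
a bound independent of the time horizon `T ∈ (0, A₀]`. -/
theorem stmt7 (A : H →L[ℝ] H) (B : U →L[ℝ] H) (N A₀ : ℝ) (hN : 0 < N) (hA₀ : 0 < A₀)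
    (T : ℝ) (hT : 0 < T) (hTA : T ≤ A₀)
    (ytil ptil : ℝ → H)
    (hy : ∀ t ∈ Set.Icc (0:ℝ) T,
      HasDerivAt ytil (A (ytil t) + B (-(adjoint B (ptil t)))) t)
    (hp : ∀ t ∈ Set.Icc (0:ℝ) T,
      HasDerivAt ptil (-(adjoint A (ptil t)) - N • ytil t) t) :
    (∫ t in (0:ℝ)..T, (‖ytil t‖ + ‖-(adjoint B (ptil t))‖)) ≤
      (1 + 1 / Real.sqrt N) *
        Real.sqrt (A₀ * (‖ytil 0‖ * ‖ptil 0‖ + ‖ytil T‖ * ‖ptil T‖)) :=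
  stmt7_general A B N A₀ hN T hT hTA ytil ptil hy hp
end

section
/- Let H and U be real Hilbert spaces, let A : H → H and B : U → H be continuous linear maps, and let N be a real constant. Let ȳ, p̄, y_d ∈ H and v̄ ∈ U satisfy the steady-state relations A ȳ + B v̄ = 0 and A* p̄ + N·(ȳ − y_d) = 0. Let τ > 0 and let y : ℝ → H be differentiable with y'(t) = A y(t) + B v̄ for all t ∈ [0, τ]. Then ⟨y(0), p̄⟩ − ⟨y(τ), p̄⟩ + (N/2) ∫₀^τ ‖y(t) − ȳ‖² dt = (N/2) ∫₀^τ ( ‖y(t) − y_d‖² − ‖ȳ − y_d‖² ) dt. In particular, the system is strictly dissipative at (ȳ, v̄): the storage function S(y) = −⟨y, p̄⟩ satisfies a strict dissipation inequality with supply rate (N/2)(‖y − y_d‖² − ‖ȳ − y_d‖²) and dissipation rate α(s) = (N/2)s². -/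
/-!
Since `A ȳ + B v̄ = 0`, the derivative of `t ↦ ⟪y t, p̄⟫` along the trajectory is
`⟪A (y - ȳ), p̄⟫ = ⟪y - ȳ, A* p̄⟫ = -N ⟪y - ȳ, ȳ - y_d⟫`. Expanding
`y - y_d = (y - ȳ) + (ȳ - y_d)` writes the supply rate as `(N/2) ‖y - ȳ‖² + N ⟪y - ȳ, ȳ - y_d⟫`,
and integrating over `[0, τ]` turns the cross term into boundary values of the storage.
-/

open ContinuousLinearMap
open scoped RealInnerProductSpace

section Dissipativity

variable {E : Type*} [NormedAddCommGroup E] [InnerProductSpace ℝ E]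

theorem norm_sub_sq_sub_norm_sub_sq (x w z : E) :
    ‖x - z‖ ^ 2 - ‖w - z‖ ^ 2 = ‖x - w‖ ^ 2 + 2 * ⟪x - w, w - z⟫ := by
  rw [show x - z = (x - w) + (w - z) by abel, norm_add_sq_real]
  ring

variable [CompleteSpace E] {F : Type*} [NormedAddCommGroup F] [NormedSpace ℝ F]

theorem inner_apply_add_eq_inner_adjoint {A : E →L[ℝ] E} {B : F →L[ℝ] E} {ybar : E}
    {vbar : F} (hsteady : A ybar + B vbar = 0) (x p : E) :
    ⟪A x + B vbar, p⟫ = ⟪x - ybar, adjoint A p⟫ := by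
  rw [adjoint_inner_right, map_sub, eq_neg_of_add_eq_zero_left hsteady, sub_neg_eq_add]

theorem integral_inner_adjoint_eq_of_hasDerivAt {A : E →L[ℝ] E} {B : F →L[ℝ] E} {ybar : E}
    {vbar : F} (hsteady : A ybar + B vbar = 0) (p : E) {y : ℝ → E} {a b : ℝ} (hab : a ≤ b)
    (hy : ∀ t ∈ Set.Icc a b, HasDerivAt y (A (y t) + B vbar) t) :
    ∫ t in a..b, ⟪y t - ybar, adjoint A p⟫ = ⟪y b, p⟫ - ⟪y a, p⟫ := by
  rw [← Set.uIcc_of_le hab] at hy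
  have hcont : ContinuousOn y (Set.uIcc a b) := HasDerivAt.continuousOn hy
  refine intervalIntegral.integral_eq_sub_of_hasDerivAt (f := fun s => ⟪y s, p⟫)
    (fun t ht => ?_) ?_
  · simpa [inner_apply_add_eq_inner_adjoint hsteady (y t) p] using
      (hy t ht).inner ℝ (hasDerivAt_const t p)
  · exact ((hcont.sub continuousOn_const).inner continuousOn_const).intervalIntegrable

end Dissipativity

variable {H : Type*} [NormedAddCommGroup H] [InnerProductSpace ℝ H] [CompleteSpace H]
variable {U : Type*} [NormedAddCommGroup U] [InnerProductSpace ℝ U] [CompleteSpace U]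

/-- Strict dissipativity identity: if `A ȳ + B v̄ = 0` and `A* p̄ + N(ȳ − y_d) = 0`, then
along any trajectory of `y' = A y + B v̄` on `[0, τ]`,
`⟨y(0), p̄⟩ − ⟨y(τ), p̄⟩ + (N/2)∫₀^τ ‖y − ȳ‖² = (N/2)∫₀^τ (‖y − y_d‖² − ‖ȳ − y_d‖²)`. -/
theorem stmt8 (A : H →L[ℝ] H) (B : U →L[ℝ] H) (N : ℝ)
    (ybar pbar yd : H) (vbar : U)
    (hsteady : A ybar + B vbar = 0)
    (hadj : adjoint A pbar + N • (ybar - yd) = 0)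
    (τ : ℝ) (hτ : 0 < τ)
    (y : ℝ → H)
    (hy : ∀ t ∈ Set.Icc (0:ℝ) τ, HasDerivAt y (A (y t) + B vbar) t) :
    ⟪y 0, pbar⟫ - ⟪y τ, pbar⟫
        + N / 2 * (∫ t in (0:ℝ)..τ, ‖y t - ybar‖ ^ 2) =
      N / 2 * (∫ t in (0:ℝ)..τ, (‖y t - yd‖ ^ 2 - ‖ybar - yd‖ ^ 2)) := by
  have hstorage := integral_inner_adjoint_eq_of_hasDerivAt hsteady pbar hτ.le hy
  have hsupply : ∀ t, N / 2 * (‖y t - yd‖ ^ 2 - ‖ybar - yd‖ ^ 2)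
      = N / 2 * ‖y t - ybar‖ ^ 2 - ⟪y t - ybar, adjoint A pbar⟫ := fun t => by
    rw [norm_sub_sq_sub_norm_sub_sq _ ybar, eq_neg_of_add_eq_zero_left hadj, inner_neg_right,
      real_inner_smul_right]
    ring
  have hcont : ContinuousOn y (Set.uIcc 0 τ) := by
    rw [Set.uIcc_of_le hτ.le]
    exact HasDerivAt.continuousOn hy
  have hsplit : N / 2 * (∫ t in (0:ℝ)..τ, (‖y t - yd‖ ^ 2 - ‖ybar - yd‖ ^ 2))
      = N / 2 * (∫ t in (0:ℝ)..τ, ‖y t - ybar‖ ^ 2)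
        - ∫ t in (0:ℝ)..τ, ⟪y t - ybar, adjoint A pbar⟫ := by
    rw [← intervalIntegral.integral_const_mul,
      intervalIntegral.integral_congr fun t _ => hsupply t, intervalIntegral.integral_sub,
      intervalIntegral.integral_const_mul]
    · exact (continuousOn_const.mul ((hcont.sub continuousOn_const).norm.pow 2)).intervalIntegrable
    · exact ((hcont.sub continuousOn_const).inner continuousOn_const).intervalIntegrable
  rw [hsplit, hstorage]
  ring
end

section
/- Let H be a real Banach space and A : H → H a continuous linear map with ‖exp(tA)‖ ≤ M₀ e^{−νt} for all t ≥ 0, where M₀ > 0 and ν > 0. Let T > 0, N > 0, p_T ∈ H, C₁ ≥ 0, and let y : [0, T] → H be continuous with ‖y(s)‖ ≤ C₁ e^{−νs} for all s ∈ [0, T]. Define p(t) = exp((T−t)A) p_T + N ∫_t^T exp((s−t)A) (y(s)) ds for t ∈ [0, T]. Then for every t ∈ [0, T], ‖p(t)‖ ≤ M₀ e^{−ν(T−t)} ‖p_T‖ + (N M₀ C₁ / (2ν)) e^{−νt}. -/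
/-!
Estimate the two terms of the Duhamel formula separately. The free term decays like
`e^{-ν(T-t)}` by the semigroup bound. In the forced term the two decay rates combine:
`e^{-ν(s-t)} e^{-νs} = e^{νt} e^{-2νs}`, and `∫ₜ^∞ e^{-2νs} ds = e^{-2νt}/(2ν)`, which leaves
`e^{-νt}/(2ν)`.
-/

variable {H : Type*} [NormedAddCommGroup H] [NormedSpace ℝ H] [CompleteSpace H]

open Real intervalIntegral

lemma integral_exp_neg_mul_le {c : ℝ} (hc : 0 < c) (a b : ℝ) :
    ∫ x in a..b, exp (-c * x) ≤ exp (-c * a) / c := by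
  have hc' : -c ≠ 0 := neg_ne_zero.mpr hc.ne'
  rw [integral_comp_mul_left (fun x => exp x) hc', integral_exp, smul_eq_mul, inv_neg,
    neg_mul, ← mul_neg, neg_sub, inv_mul_eq_div]
  gcongr
  linarith [exp_pos (-c * b)]

lemma norm_integral_le_of_norm_le_exp {E : Type*} [NormedAddCommGroup E] [NormedSpace ℝ E]
    {f : ℝ → E} {K c a b : ℝ} (hK : 0 ≤ K) (hc : 0 < c) (hab : a ≤ b)
    (hf : ∀ x ∈ Set.Ioc a b, ‖f x‖ ≤ K * exp (-c * x)) :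
    ‖∫ x in a..b, f x‖ ≤ K * exp (-c * a) / c :=
  calc ‖∫ x in a..b, f x‖ ≤ ∫ x in a..b, K * exp (-c * x) :=
        norm_integral_le_of_norm_le hab (.of_forall hf)
          ((by fun_prop : Continuous _).intervalIntegrable a b)
    _ = K * ∫ x in a..b, exp (-c * x) := integral_const_mul K _
    _ ≤ K * exp (-c * a) / c := by
        rw [mul_div_assoc]; gcongr; exact integral_exp_neg_mul_le hc a b

lemma norm_exp_smul_apply_le {E : Type*} [NormedAddCommGroup E] [NormedSpace ℝ E]
    {A : E →L[ℝ] E} {M ν : ℝ}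
    (hA : ∀ t : ℝ, 0 ≤ t → ‖NormedSpace.exp (t • A)‖ ≤ M * exp (-ν * t))
    {t : ℝ} (ht : 0 ≤ t) (x : E) :
    ‖NormedSpace.exp (t • A) x‖ ≤ M * exp (-ν * t) * ‖x‖ :=
  (NormedSpace.exp (t • A)).le_of_opNorm_le (hA t ht) x

lemma norm_integral_exp_smul_apply_le {E : Type*} [NormedAddCommGroup E] [NormedSpace ℝ E]
    {A : E →L[ℝ] E} {M C ν : ℝ} (hM : 0 ≤ M) (hC : 0 ≤ C) (hν : 0 < ν)
    (hA : ∀ t : ℝ, 0 ≤ t → ‖NormedSpace.exp (t • A)‖ ≤ M * exp (-ν * t))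
    {y : ℝ → E} {t T : ℝ} (htT : t ≤ T)
    (hy : ∀ s ∈ Set.Ioc t T, ‖y s‖ ≤ C * exp (-ν * s)) :
    ‖∫ s in t..T, NormedSpace.exp ((s - t) • A) (y s)‖ ≤ M * C / (2 * ν) * exp (-ν * t) := by
  have hdecay (s : ℝ) (hs : s ∈ Set.Ioc t T) :
      ‖NormedSpace.exp ((s - t) • A) (y s)‖ ≤ M * C * exp (ν * t) * exp (-(2 * ν) * s) :=
    calc _ ≤ M * exp (-ν * (s - t)) * ‖y s‖ := norm_exp_smul_apply_le hA (by linarith [hs.1]) _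
      _ ≤ M * exp (-ν * (s - t)) * (C * exp (-ν * s)) := by gcongr; exact hy s hs
      _ = M * C * exp (ν * t) * exp (-(2 * ν) * s) := by
          rw [mul_mul_mul_comm, ← exp_add, mul_assoc (M * C), ← exp_add]; ring_nf
  refine (norm_integral_le_of_norm_le_exp (by positivity) (by positivity) htT hdecay).trans_eq ?_
  rw [mul_assoc (M * C), ← exp_add]
  ring_nf

theorem stmt10_general (A : H →L[ℝ] H) (M₀ ν : ℝ) (hM₀ : 0 < M₀) (hν : 0 < ν)
    (hA : ∀ t : ℝ, 0 ≤ t → ‖NormedSpace.exp (t • A)‖ ≤ M₀ * Real.exp (-ν * t))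
    (T N : ℝ) (hN : 0 < N)
    (pT : H) (C₁ : ℝ) (hC₁ : 0 ≤ C₁)
    (y : ℝ → H)
    (hybound : ∀ s ∈ Set.Icc (0:ℝ) T, ‖y s‖ ≤ C₁ * Real.exp (-ν * s)) :
    ∀ t ∈ Set.Icc (0:ℝ) T,
      ‖NormedSpace.exp ((T - t) • A) pT
          + N • ∫ s in t..T, NormedSpace.exp ((s - t) • A) (y s)‖ ≤
        M₀ * Real.exp (-ν * (T - t)) * ‖pT‖
          + N * M₀ * C₁ / (2 * ν) * Real.exp (-ν * t) := by
  rintro t ⟨ht0, htT⟩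
  have hfree := norm_exp_smul_apply_le hA (sub_nonneg.mpr htT) pT
  have hforced := norm_integral_exp_smul_apply_le hM₀.le hC₁ hν hA htT
    fun s hs => hybound s ⟨ht0.trans hs.1.le, hs.2⟩
  calc _ ≤ ‖NormedSpace.exp ((T - t) • A) pT‖
          + N * ‖∫ s in t..T, NormedSpace.exp ((s - t) • A) (y s)‖ := by
        grw [norm_add_le, norm_smul, Real.norm_of_nonneg hN.le]
    _ ≤ _ := by grw [hfree, hforced]; exact le_of_eq (by ring)

/-- Backward Duhamel estimate for the adjoint variable: if `‖exp(tA)‖ ≤ M₀ e^{−νt}` for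
`t ≥ 0` and `‖y(s)‖ ≤ C₁ e^{−νs}` on `[0, T]`, then
`p(t) = exp((T−t)A) p_T + N ∫ₜᵀ exp((s−t)A) y(s) ds` satisfies
`‖p(t)‖ ≤ M₀ e^{−ν(T−t)}‖p_T‖ + (N M₀ C₁/(2ν)) e^{−νt}` on `[0, T]`. -/
theorem stmt10 (A : H →L[ℝ] H) (M₀ ν : ℝ) (hM₀ : 0 < M₀) (hν : 0 < ν)
    (hA : ∀ t : ℝ, 0 ≤ t → ‖NormedSpace.exp (t • A)‖ ≤ M₀ * Real.exp (-ν * t))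
    (T N : ℝ) (hT : 0 < T) (hN : 0 < N)
    (pT : H) (C₁ : ℝ) (hC₁ : 0 ≤ C₁)
    (y : ℝ → H) (hycont : ContinuousOn y (Set.Icc 0 T))
    (hybound : ∀ s ∈ Set.Icc (0:ℝ) T, ‖y s‖ ≤ C₁ * Real.exp (-ν * s)) :
    ∀ t ∈ Set.Icc (0:ℝ) T,
      ‖NormedSpace.exp ((T - t) • A) pT
          + N • ∫ s in t..T, NormedSpace.exp ((s - t) • A) (y s)‖ ≤
        M₀ * Real.exp (-ν * (T - t)) * ‖pT‖
          + N * M₀ * C₁ / (2 * ν) * Real.exp (-ν * t) :=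
  stmt10_general A M₀ ν hM₀ hν hA T N hN pT C₁ hC₁ y hybound
end
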